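/- A paving matroid M is k-laminar if and only if M is k-closure-laminar. -/

import Mathlib

open Set

namespace Matroid

variable {α : Type*}

/-- A circuit is a minimal dependent set. -/
def Circuit (M : Matroid α) (C : Set α) : Prop := Minimal M.Dep C

/-- The rank of a set: the supremum of sizes of independent subsets. -/
noncomputable def rk (M : Matroid α) (X : Set α) : ℕ :=
  sSup {n | ∃ I, I ⊆ X ∧ M.Indep I ∧ I.ncard = n}

/-- A Hamiltonian flat is a flat with a spanning circuit. -/
def HamFlat (M : Matroid α) (F : Set α) : Prop :=
  M.IsFlat F ∧ ∃ C, M.Circuit C ∧ C ⊆ F ∧ M.closure C = F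

/-- `M` is `k`-closure-laminar if the Hamiltonian flats containing any given
`k`-element independent set form a chain under inclusion. -/
def KClosureLaminar (M : Matroid α) (k : ℕ) : Prop :=
  ∀ X ⊆ M.E, M.Indep X → X.ncard = k →
    IsChain (· ⊆ ·) {F | M.HamFlat F ∧ X ⊆ F}

/-- `M` is `k`-laminar if whenever two circuits meet in at least `k` elements,
one is contained in the closure of the other. -/
def KLaminar (M : Matroid α) (k : ℕ) : Prop :=
  ∀ C₁ C₂, M.Circuit C₁ → M.Circuit C₂ → k ≤ (C₁ ∩ C₂).ncard →
    C₁ ⊆ M.closure C₂ ∨ C₂ ⊆ M.closure C₁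

/-- Deletion of a set of elements. -/
def delete' (M : Matroid α) (D : Set α) : Matroid α := M.restrict (M.E \ D)

/-- Contraction of a set of elements, defined via duality. -/
def contract' (M : Matroid α) (C : Set α) : Matroid α := (M✶.delete' C)✶

end Matroid

namespace Matroid

variable {α : Type*} {M : Matroid α} {C X F S I : Set α}

lemma Circuit.dep' (h : M.Circuit C) : M.Dep C := h.prop

lemma Circuit.subset_ground' (h : M.Circuit C) : C ⊆ M.E := h.prop.subset_ground

lemma Circuit.indep_of_ssubset' (h : M.Circuit C) (hSC : S ⊂ C) : M.Indep S := by
  by_contra hS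
  have hdep : M.Dep S := ⟨hS, hSC.subset.trans h.subset_ground'⟩
  exact hSC.ne (subset_antisymm hSC.subset (h.2 hdep hSC.subset))

lemma exists_circuit_subset' [M.Finite] (hX : M.Dep X) : ∃ C ⊆ X, M.Circuit C := by
  have hne : X.ncard ∈ {n | ∃ D, D ⊆ X ∧ M.Dep D ∧ D.ncard = n} :=
    ⟨X, Subset.rfl, hX, rfl⟩
  obtain ⟨D, hDX, hD, hcard⟩ := Nat.sInf_mem ⟨_, hne⟩
  refine ⟨D, hDX, hD, fun D' hD' hD'D => ?_⟩
  have hle : sInf {n | ∃ D, D ⊆ X ∧ M.Dep D ∧ D.ncard = n} ≤ D'.ncard :=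
    Nat.sInf_le ⟨D', hD'D.trans hDX, hD', rfl⟩
  rw [← hcard] at hle
  have hfin : D.Finite := M.set_finite D hD.subset_ground
  exact le_of_eq (eq_of_subset_of_ncard_le hD'D hle hfin).symm

lemma ncard_le_rk' [M.Finite] (hI : M.Indep I) : I.ncard ≤ M.rk M.E :=
  le_csSup ⟨M.E.ncard, by
      rintro n ⟨J, hJE, -, rfl⟩
      exact ncard_le_ncard hJE M.ground_finite⟩
    ⟨I, hI.subset_ground, hI, rfl⟩

lemma ncard_lt_rk' [M.Finite] (hI : M.Indep I) (h : M.closure I ≠ M.E) :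
    I.ncard + 1 ≤ M.rk M.E := by
  obtain ⟨B, hB, hIB⟩ := hI.exists_isBase_superset
  have hne : I ≠ B := fun h' => h (h' ▸ hB.closure_eq)
  have hlt : I.ncard < B.ncard :=
    ncard_lt_ncard (hIB.ssubset_of_ne hne) (M.set_finite B hB.subset_ground)
  exact hlt.trans_le (ncard_le_rk' hB.indep)

lemma flat_closure' (M : Matroid α) (X : Set α) : M.IsFlat (M.closure X) := by
  have h := M.subtypeClosure.isClosed_closure ⟨X ∩ M.E, inter_subset_right⟩
  rw [isClosed_iff_isFlat] at h
  rwa [closure_eq_subtypeClosure]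

lemma Circuit.hamFlat_closure' (hC : M.Circuit C) : M.HamFlat (M.closure C) :=
  ⟨M.flat_closure' C, C, hC, M.subset_closure C hC.subset_ground', rfl⟩

lemma HamFlat.exists_circuit_superset' [M.Finite]
    (hpav : ∀ C, M.Circuit C → M.rk M.E ≤ C.ncard)
    (hF : M.HamFlat F) (hFE : F ≠ M.E) (hX : M.Indep X) (hXF : X ⊆ F) :
    ∃ C, M.Circuit C ∧ X ⊆ C ∧ M.closure C = F := by
  obtain ⟨hflat, C0, hC0, hC0F, hcl0⟩ := hF
  obtain ⟨B, hB, hXB⟩ := hX.subset_isBasis_of_subset hXF hflat.subset_ground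
  have hclB : M.closure B = F := by rw [hB.closure_eq_closure, hflat.closure]
  have hnotsub : ¬ C0 ⊆ B := fun h => hC0.dep'.not_indep (hB.indep.subset h)
  obtain ⟨e, heC0, heB⟩ := not_subset.mp hnotsub
  have heF : e ∈ F := hC0F heC0
  have hdep : M.Dep (insert e B) := hB.insert_dep ⟨heF, heB⟩
  obtain ⟨C, hCsub, hC⟩ := exists_circuit_subset' hdep
  have hBfin : B.Finite := M.set_finite B hB.indep.subset_ground
  have hcardins : (insert e B).ncard = B.ncard + 1 := ncard_insert_of_notMem heB hBfin
  have hrk : (insert e B).ncard ≤ M.rk M.E := by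
    rw [hcardins]
    exact ncard_lt_rk' hB.indep (by rw [hclB]; exact hFE)
  have hCeq : C = insert e B := by
    refine eq_of_subset_of_ncard_le hCsub (hrk.trans (hpav C hC)) ?_
    exact (hBfin.insert e)
  subst hCeq
  refine ⟨insert e B, hC, hXB.trans (subset_insert e B), ?_⟩
  have h1 : F ⊆ M.closure (insert e B) :=
    hclB ▸ M.closure_subset_closure (subset_insert e B)
  have h2 : M.closure (insert e B) ⊆ F := by
    have : insert e B ⊆ F := insert_subset heF hB.subset
    rw [← hflat.closure]
    exact M.closure_subset_closure this
  exact subset_antisymm h2 h1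

end Matroid

/-- a paving matroid is `k`-laminar iff it is `k`-closure-laminar. -/
theorem paving_kLaminar_iff_kClosureLaminar {α : Type*} (M : Matroid α) [M.Finite]
    (hpav : ∀ C, M.Circuit C → M.rk M.E ≤ C.ncard) (k : ℕ) :
    M.KLaminar k ↔ M.KClosureLaminar k := by
  constructor
  · intro hl X hXE hXi hXc F₁ hF₁ F₂ hF₂ hne
    by_cases h1 : F₁ = M.E
    · exact Or.inr (h1 ▸ hF₂.1.1.subset_ground)
    by_cases h2 : F₂ = M.E
    · exact Or.inl (h2 ▸ hF₁.1.1.subset_ground)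
    obtain ⟨C₁, hC₁, hXC₁, hcl₁⟩ :=
      Matroid.HamFlat.exists_circuit_superset' hpav hF₁.1 h1 hXi hF₁.2
    obtain ⟨C₂, hC₂, hXC₂, hcl₂⟩ :=
      Matroid.HamFlat.exists_circuit_superset' hpav hF₂.1 h2 hXi hF₂.2
    have hfin : (C₁ ∩ C₂).Finite :=
      (M.set_finite C₁ hC₁.subset_ground').subset inter_subset_left
    have hk : k ≤ (C₁ ∩ C₂).ncard := by
      rw [← hXc]
      exact Set.ncard_le_ncard (subset_inter hXC₁ hXC₂) hfin
    rcases hl C₁ C₂ hC₁ hC₂ hk with h | h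
    · exact Or.inl (hcl₁ ▸ hcl₂ ▸ M.closure_subset_closure_of_subset_closure h)
    · exact Or.inr (hcl₂ ▸ hcl₁ ▸ M.closure_subset_closure_of_subset_closure h)
  · intro hcl C₁ C₂ hC₁ hC₂ hk
    by_cases he : C₁ = C₂
    · exact Or.inl (he ▸ M.subset_closure C₂ hC₂.subset_ground')
    obtain ⟨X, hXsub, hXcard⟩ := Set.exists_subset_card_eq hk
    have hXC₁ : X ⊆ C₁ := hXsub.trans inter_subset_left
    have hXC₂ : X ⊆ C₂ := hXsub.trans inter_subset_right
    have hss : X ⊂ C₁ := by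
      refine hXC₁.ssubset_of_ne fun hXeq => ?_
      have h12 : C₁ ⊆ C₂ := hXeq ▸ hXC₂
      exact he (subset_antisymm h12 (hC₂.2 hC₁.prop h12))
    have hXi : M.Indep X := hC₁.indep_of_ssubset' hss
    have hchain := hcl X hXi.subset_ground hXi hXcard
    have hm₁ : M.closure C₁ ∈ {F | M.HamFlat F ∧ X ⊆ F} :=
      ⟨hC₁.hamFlat_closure', M.subset_closure_of_subset hXC₁ hC₁.subset_ground'⟩
    have hm₂ : M.closure C₂ ∈ {F | M.HamFlat F ∧ X ⊆ F} :=
      ⟨hC₂.hamFlat_closure', M.subset_closure_of_subset hXC₂ hC₂.subset_ground'⟩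
    by_cases hceq : M.closure C₁ = M.closure C₂
    · exact Or.inl (hceq ▸ M.subset_closure C₁ hC₁.subset_ground')
    rcases hchain hm₁ hm₂ hceq with h | h
    · exact Or.inl ((M.subset_closure C₁ hC₁.subset_ground').trans h)
    · exact Or.inr ((M.subset_closure C₂ hC₂.subset_ground').trans h)
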